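/- arXiv:1311.6439 — 2 statements merged into one kernel-verified Lean document; each statement's English description precedes it below -/
import Mathlib

section
/- Power conservation under user-wise AMSE transfer: in the multiuser MIMO setup with the matrix X as defined, if β ∈ ℝ^K satisfies X·β = σ²·(tr(Q_1),…,tr(Q_K))ᵀ with β_k > 0 for every k, and the downlink power allocations are P_k = β_k·α_k²·Q_k⁻¹, then the same sum power is allocated in both channels: Σ_{k=1}^K tr(P_k) = Σ_{k=1}^K tr(Q_k). -/
open Matrix BigOperators ComplexOrder

noncomputable section

/-- A diagonal complex matrix built from a real vector. -/
def diagC {n : ℕ} (v : Fin n → ℝ) : Matrix (Fin n) (Fin n) ℂ :=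
  Matrix.diagonal (fun i => (v i : ℂ))

/-- The multiuser MIMO setup: `K` users, `N` BS antennas, per-user antenna counts `M k`,
symbol counts `S k`, estimated channels `H k`, transmit/receive filters `G k`, `U k` with
unit-norm columns, invertible real diagonal scaling factors `α k`, Hermitian positive
semidefinite antenna correlation matrices `Rb k`, `Rm k`, channel estimation error variances
`σe2 k ≥ 0` and noise variance `σ2 > 0`. -/
structure MIMOSetup (K N : ℕ) where
  M : Fin K → ℕ
  S : Fin K → ℕ
  hM : ∀ k, 0 < M k
  hS : ∀ k, 0 < S k
  H : ∀ k : Fin K, Matrix (Fin N) (Fin (M k)) ℂ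
  G : ∀ k : Fin K, Matrix (Fin N) (Fin (S k)) ℂ
  U : ∀ k : Fin K, Matrix (Fin (M k)) (Fin (S k)) ℂ
  α : ∀ k : Fin K, Fin (S k) → ℝ
  Rb : Fin K → Matrix (Fin N) (Fin N) ℂ
  Rm : ∀ k : Fin K, Matrix (Fin (M k)) (Fin (M k)) ℂ
  σe2 : Fin K → ℝ
  σ2 : ℝ
  hG : ∀ k i, ((G k)ᴴ * G k) i i = 1
  hU : ∀ k i, ((U k)ᴴ * U k) i i = 1
  hα : ∀ k i, α k i ≠ 0
  hRb : ∀ k, (Rb k).PosSemidef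
  hRm : ∀ k, (Rm k).PosSemidef
  hσe2 : ∀ k, 0 ≤ σe2 k
  hσ2 : 0 < σ2

namespace MIMOSetup

variable {K N : ℕ} (s : MIMOSetup K N)

/-- `α_k` as a diagonal complex matrix. -/
def αM (k : Fin K) : Matrix (Fin (s.S k)) (Fin (s.S k)) ℂ := diagC (s.α k)

/-- `Γ_k^{DL}` for downlink power allocations `P`. -/
def GammaDL (P : ∀ k : Fin K, Matrix (Fin (s.S k)) (Fin (s.S k)) ℂ) (k : Fin K) :
    Matrix (Fin (s.M k)) (Fin (s.M k)) ℂ :=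
  (s.H k)ᴴ * (∑ i, s.G i * P i * (s.G i)ᴴ) * s.H k
    + ((s.σe2 k : ℂ) * (s.Rb k * ∑ i, s.G i * P i * (s.G i)ᴴ).trace) • s.Rm k
    + (s.σ2 : ℂ) • 1

/-- `Γ_c` for uplink power allocations `Q`. -/
def GammaC (Q : ∀ k : Fin K, Matrix (Fin (s.S k)) (Fin (s.S k)) ℂ) :
    Matrix (Fin N) (Fin N) ℂ :=
  (∑ i, (s.H i * s.U i * Q i * (s.U i)ᴴ * (s.H i)ᴴ
    + ((s.σe2 i : ℂ) * (s.Rm i * (s.U i * Q i * (s.U i)ᴴ)).trace) • s.Rb i))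
    + (s.σ2 : ℂ) • 1

/-- The `k`-th user downlink AMSE `ξ̄_k^{DL}`. -/
def xiDLk (P : ∀ k : Fin K, Matrix (Fin (s.S k)) (Fin (s.S k)) ℂ) (k : Fin K) : ℝ :=
  (s.S k : ℝ) + (((P k)⁻¹ * (s.αM k) ^ 2 * (s.U k)ᴴ * s.GammaDL P k * s.U k).trace).re
    - 2 * ((((s.G k)ᴴ * s.H k * s.U k * s.αM k).trace).re)

/-- The `k`-th user uplink AMSE `ξ̄_k^{UL}`. -/
def xiULk (Q : ∀ k : Fin K, Matrix (Fin (s.S k)) (Fin (s.S k)) ℂ) (k : Fin K) : ℝ :=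
  (s.S k : ℝ) + (((Q k)⁻¹ * (s.αM k) ^ 2 * (s.G k)ᴴ * s.GammaC Q * s.G k).trace).re
    - 2 * (((s.αM k * (s.G k)ᴴ * s.H k * s.U k).trace).re)

/-- Downlink sum AMSE `ξ̄^{DL}`. -/
def xiDL (P : ∀ k : Fin K, Matrix (Fin (s.S k)) (Fin (s.S k)) ℂ) : ℝ := ∑ k, s.xiDLk P k

/-- Uplink sum AMSE `ξ̄^{UL}`. -/
def xiUL (Q : ∀ k : Fin K, Matrix (Fin (s.S k)) (Fin (s.S k)) ℂ) : ℝ := ∑ k, s.xiULk Q k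

end MIMOSetup

namespace MIMOSetup

variable {K N : ℕ}

/-- The matrix `X` of the user-wise uplink-to-downlink AMSE transfer (eq. (12)). -/
def Xmat (s : MIMOSetup K N) (Q : ∀ k : Fin K, Fin (s.S k) → ℝ) :
    Matrix (Fin K) (Fin K) ℝ := fun k l =>
  if k = l then
    s.σ2 * (((diagC (Q k))⁻¹ * (s.αM k) ^ 2).trace).re
      + ∑ i ∈ Finset.univ.erase k,
        ((((diagC (Q k))⁻¹ * (s.αM k) ^ 2 * (s.G k)ᴴ * s.H i * s.U i * diagC (Q i)
            * (s.U i)ᴴ * (s.H i)ᴴ * s.G k).trace).re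
          + s.σe2 i * (((s.Rm i * (s.U i * diagC (Q i) * (s.U i)ᴴ)).trace).re)
            * (((s.Rb i * (s.G k * (s.αM k) ^ 2 * (diagC (Q k))⁻¹ * (s.G k)ᴴ)).trace).re))
  else
    -((((diagC (Q l))⁻¹ * (s.αM l) ^ 2 * (s.G l)ᴴ * s.H k * s.U k * diagC (Q k)
        * (s.U k)ᴴ * (s.H k)ᴴ * s.G l).trace).re
      + s.σe2 k * (((s.Rm k * (s.U k * diagC (Q k) * (s.U k)ᴴ)).trace).re)
        * (((s.Rb k * (s.G l * (s.αM l) ^ 2 * (diagC (Q l))⁻¹ * (s.G l)ᴴ)).trace).re))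

end MIMOSetup

lemma diagC_inv {n : ℕ} (v : Fin n → ℝ) (hv : ∀ i, v i ≠ 0) :
    (diagC v)⁻¹ = diagC (fun i => (v i)⁻¹) := by
  apply Matrix.inv_eq_right_inv
  rw [diagC, diagC, Matrix.diagonal_mul_diagonal]
  have : (fun i => (v i : ℂ) * ((fun i => ((v i)⁻¹ : ℝ)) i : ℂ)) = fun _ => (1 : ℂ) := by
    funext i
    push_cast
    exact mul_inv_cancel₀ (by exact_mod_cast hv i)
  rw [this, Matrix.diagonal_one]

lemma diagC_sq {n : ℕ} (v : Fin n → ℝ) :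
    (diagC v) ^ 2 = diagC (fun i => v i ^ 2) := by
  rw [sq, diagC, diagC, Matrix.diagonal_mul_diagonal]
  ext i j
  simp only [Matrix.diagonal_apply]
  split_ifs
  · push_cast; ring
  · rfl

lemma trace_diagC_mul {n : ℕ} (a b : Fin n → ℝ) :
    (diagC a * diagC b).trace = ((∑ i, a i * b i : ℝ) : ℂ) := by
  simp [diagC, Matrix.diagonal_mul_diagonal, Matrix.trace_diagonal]

lemma trace_diagC {n : ℕ} (a : Fin n → ℝ) :
    (diagC a).trace = ((∑ i, a i : ℝ) : ℂ) := by
  simp [diagC, Matrix.trace_diagonal]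

/-- **Power conservation under user-wise AMSE transfer.** If `β ∈ ℝ^K` solves
`X·β = σ²·(tr Q_1, …, tr Q_K)ᵀ` with `β_k > 0` for every `k`, and the downlink power
allocations are `P_k = β_k • α_k² Q_k⁻¹`, then `Σ_k tr P_k = Σ_k tr Q_k`. -/
theorem power_conservation_userwise_transfer {K N : ℕ} (hK : 0 < K) (hN : 0 < N)
    (s : MIMOSetup K N)
    (Q : ∀ k : Fin K, Fin (s.S k) → ℝ) (hQ : ∀ k i, 0 < Q k i)
    (β : Fin K → ℝ) (hβpos : ∀ k, 0 < β k)
    (hβ : s.Xmat Q *ᵥ β = fun k => s.σ2 * ((diagC (Q k)).trace).re)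
    (P : ∀ k : Fin K, Matrix (Fin (s.S k)) (Fin (s.S k)) ℂ)
    (hP : ∀ k, P k = (β k : ℂ) • ((s.αM k) ^ 2 * (diagC (Q k))⁻¹)) :
    ∑ k, (P k).trace = ∑ k, (diagC (Q k)).trace := by
  classical
  set t : Fin K → ℝ := fun l => (((diagC (Q l))⁻¹ * (s.αM l) ^ 2).trace).re with ht
  set T : Fin K → Fin K → ℝ := fun k l =>
    ((((diagC (Q l))⁻¹ * (s.αM l) ^ 2 * (s.G l)ᴴ * s.H k * s.U k * diagC (Q k)
        * (s.U k)ᴴ * (s.H k)ᴴ * s.G l).trace).re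
      + s.σe2 k * (((s.Rm k * (s.U k * diagC (Q k) * (s.U k)ᴴ)).trace).re)
        * (((s.Rb k * (s.G l * (s.αM l) ^ 2 * (diagC (Q l))⁻¹ * (s.G l)ᴴ)).trace).re))
    with hT
  have hXd : ∀ l, s.Xmat Q l l = s.σ2 * t l + ∑ i ∈ Finset.univ.erase l, T i l := by
    intro l
    simp only [MIMOSetup.Xmat, eq_self_iff_true, if_true, ht, hT]
  have hXo : ∀ k l, k ≠ l → s.Xmat Q k l = -T k l := by
    intro k l h
    simp only [MIMOSetup.Xmat, if_neg h, hT]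
  have hcol : ∀ l, ∑ k, s.Xmat Q k l = s.σ2 * t l := by
    intro l
    rw [← Finset.add_sum_erase _ _ (Finset.mem_univ l), hXd l,
      Finset.sum_congr rfl (fun k hk => hXo k l (Finset.ne_of_mem_erase hk)),
      Finset.sum_neg_distrib]
    ring
  have hsum : ∑ l, s.σ2 * t l * β l = ∑ k, s.σ2 * ((diagC (Q k)).trace).re := by
    have h1 := congrArg (fun v : Fin K → ℝ => ∑ k, v k) hβ
    simp only [Matrix.mulVec, dotProduct] at h1
    rw [Finset.sum_comm] at h1
    calc ∑ l, s.σ2 * t l * β l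
        = ∑ l, ∑ k, s.Xmat Q k l * β l := by
          refine Finset.sum_congr rfl fun l _ => ?_
          rw [← Finset.sum_mul, hcol]
      _ = _ := h1
  have hkey : ∑ l, t l * β l = ∑ k, ((diagC (Q k)).trace).re := by
    refine mul_left_cancel₀ s.hσ2.ne' ?_
    rw [Finset.mul_sum, Finset.mul_sum]
    simpa [mul_assoc] using hsum
  have hinv : ∀ k, (diagC (Q k))⁻¹ = diagC (fun i => (Q k i)⁻¹) :=
    fun k => diagC_inv _ (fun i => (hQ k i).ne')
  have hα2 : ∀ k, (s.αM k) ^ 2 = diagC (fun i => s.α k i ^ 2) := by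
    intro k; rw [MIMOSetup.αM]; exact diagC_sq _
  have htk : ∀ k, t k = ∑ i, (Q k i)⁻¹ * (s.α k i) ^ 2 := by
    intro k
    simp only [ht, hinv k, hα2 k, trace_diagC_mul, Complex.ofReal_re]
  have hPk : ∀ k, (P k).trace = ((t k * β k : ℝ) : ℂ) := by
    intro k
    rw [hP k, Matrix.trace_smul, hα2 k, hinv k, trace_diagC_mul, htk k, smul_eq_mul]
    push_cast
    rw [Finset.sum_mul, Finset.mul_sum]
    exact Finset.sum_congr rfl fun i _ => by ring
  calc ∑ k, (P k).trace = ∑ k, ((t k * β k : ℝ) : ℂ) :=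
        Finset.sum_congr rfl fun k _ => hPk k
    _ = ((∑ k, t k * β k : ℝ) : ℂ) := by push_cast; rfl
    _ = ((∑ k, ((diagC (Q k)).trace).re : ℝ) : ℂ) := by rw [hkey]
    _ = ∑ k, (diagC (Q k)).trace := by
        push_cast
        exact Finset.sum_congr rfl fun k _ => by rw [trace_diagC, Complex.ofReal_re]
end
end

section
/- User-wise AMSE transfer from downlink to uplink: in the multiuser MIMO setup with the matrix T as defined, suppose β̃ ∈ ℝ^K satisfies the linear system T·β̃ = σ²·(tr(P_1),…,tr(P_K))ᵀ and β̃_k > 0 for every k, and define the uplink power allocations Q_k = β̃_k·α_k²·P_k⁻¹. Then every user achieves the same AMSE in both channels: ξ̄_k^{UL} = ξ̄_k^{DL} for all k ∈ {1,…,K}. -/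
open Matrix BigOperators ComplexOrder

noncomputable section

namespace MIMOSetup

variable {K N : ℕ}

/-- The matrix `T` of the user-wise downlink-to-uplink AMSE transfer (eq. (15)). -/
def Tmat (s : MIMOSetup K N) (P : ∀ k : Fin K, Fin (s.S k) → ℝ) :
    Matrix (Fin K) (Fin K) ℝ := fun k l =>
  if k = l then
    s.σ2 * (((diagC (P k))⁻¹ * (s.αM k) ^ 2).trace).re
      + ∑ i ∈ Finset.univ.erase k,
        ((((diagC (P k))⁻¹ * (s.αM k) ^ 2 * (s.U k)ᴴ * (s.H k)ᴴ * s.G i * diagC (P i)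
            * (s.G i)ᴴ * s.H k * s.U k).trace).re
          + s.σe2 k * (((s.Rb k * (s.G i * diagC (P i) * (s.G i)ᴴ)).trace).re)
            * (((s.Rm k * (s.U k * (s.αM k) ^ 2 * (diagC (P k))⁻¹ * (s.U k)ᴴ)).trace).re))
  else
    -((((diagC (P l))⁻¹ * (s.αM l) ^ 2 * (s.U l)ᴴ * (s.H l)ᴴ * s.G k * diagC (P k)
        * (s.G k)ᴴ * s.H l * s.U l).trace).re
      + s.σe2 l * (((s.Rm l * (s.U l * (s.αM l) ^ 2 * (diagC (P l))⁻¹ * (s.U l)ᴴ)).trace).re)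
        * (((s.Rb l * (s.G k * diagC (P k) * (s.G k)ᴴ)).trace).re))

end MIMOSetup

/-! Let `c l i` be the share of user `i`'s downlink power in the MSE of user `l`
(`MIMOSetup.coupling`). By cyclicity of the trace, commutativity of diagonal matrices and the
unit-norm columns of the filters, the downlink MSE trace of user `k` is
`∑ i, c k i + σ² tr(P_k⁻¹ α_k²)`, while for `Q_k = β_k α_k² P_k⁻¹` the uplink one is
`β_k⁻¹ (∑ i, β_i c i k + σ² tr P_k)`. Since `T = diagonal (∑ i, c k i + σ² tr(P_k⁻¹ α_k²)) - cᵀ`,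
row `k` of `T β = σ² (tr P_l)_l` says exactly that the two agree. -/

namespace Matrix

variable {n : Type*} [Fintype n]

theorem trace_diagonal_mul_of_diag_eq_one [DecidableEq n] {R : Type*} [Semiring R] (d : n → R)
    {A : Matrix n n R} (hA : ∀ i, A i i = 1) : (diagonal d * A).trace = (diagonal d).trace := by
  simp [trace, diagonal_mul, hA]

theorem IsHermitian.im_trace_mul_eq_zero {A B : Matrix n n ℂ} (hA : A.IsHermitian)
    (hB : B.IsHermitian) : (A * B).trace.im = 0 := by
  have hstar : star (A * B).trace = (A * B).trace := by
    rw [← trace_conjTranspose, conjTranspose_mul, hA.eq, hB.eq, trace_mul_comm]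
  exact Complex.conj_eq_iff_im.mp hstar

end Matrix

section diagC

variable {n : ℕ}

theorem diagC_mul_diagC (v w : Fin n → ℝ) : diagC v * diagC w = diagC (v * w) := by
  simp [diagC, diagonal_mul_diagonal]

theorem diagC_pow (v : Fin n → ℝ) (k : ℕ) : diagC v ^ k = diagC (v ^ k) := by
  simp [diagC, diagonal_pow]

theorem inv_diagC {v : Fin n → ℝ} (hv : ∀ i, v i ≠ 0) : (diagC v)⁻¹ = diagC v⁻¹ := by
  refine inv_eq_left_inv ?_
  rw [diagC_mul_diagC, diagC]
  simp [hv]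

theorem ofReal_smul_diagC (c : ℝ) (v : Fin n → ℝ) : (c : ℂ) • diagC v = diagC (c • v) := by
  ext i j
  by_cases h : i = j <;> simp [diagC, h]

theorem isHermitian_diagC (v : Fin n → ℝ) : (diagC v).IsHermitian := by
  simp [diagC, IsHermitian, diagonal_conjTranspose]

end diagC

namespace MIMOSetup

variable {K N : ℕ} (s : MIMOSetup K N)

section Coupling

variable (P : ∀ k : Fin K, Fin (s.S k) → ℝ)

def dlInterference (l i : Fin K) : ℂ :=
  ((diagC (P l))⁻¹ * (s.αM l) ^ 2 * (s.U l)ᴴ * (s.H l)ᴴ * s.G i * diagC (P i)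
    * (s.G i)ᴴ * s.H l * s.U l).trace

def bsCorrelation (l i : Fin K) : ℂ := (s.Rb l * (s.G i * diagC (P i) * (s.G i)ᴴ)).trace

def msCorrelation (l : Fin K) : ℂ :=
  (s.Rm l * (s.U l * (s.αM l) ^ 2 * (diagC (P l))⁻¹ * (s.U l)ᴴ)).trace

def coupling (l i : Fin K) : ℝ :=
  (s.dlInterference P l i).re + s.σe2 l * (s.bsCorrelation P l i).re * (s.msCorrelation P l).re

theorem Tmat_eq : s.Tmat P
    = diagonal (fun k => s.σ2 * ((diagC (P k))⁻¹ * (s.αM k) ^ 2).trace.re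
        + ∑ i, s.coupling P k i) - (of (s.coupling P))ᵀ := by
  ext k l
  by_cases hkl : k = l
  · subst hkl
    simp only [Tmat, ↓reduceIte, Finset.mem_univ, Finset.sum_erase_eq_sub, coupling,
      dlInterference, bsCorrelation, msCorrelation, Matrix.sub_apply, diagonal_apply_eq,
      transpose_apply, of_apply]
    ring
  · simp [Tmat, coupling, dlInterference, bsCorrelation, msCorrelation, hkl, mul_right_comm]

end Coupling

variable {P : ∀ k : Fin K, Fin (s.S k) → ℝ}

theorem im_bsCorrelation (l i : Fin K) : (s.bsCorrelation P l i).im = 0 :=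
  (s.hRb l).1.im_trace_mul_eq_zero (isHermitian_mul_mul_conjTranspose _ (isHermitian_diagC _))

theorem inv_diagC_mul_αM_sq (hP : ∀ k i, P k i ≠ 0) (k : Fin K) :
    (diagC (P k))⁻¹ * (s.αM k) ^ 2 = diagC ((P k)⁻¹ * s.α k ^ 2) := by
  rw [inv_diagC (hP k), αM, diagC_pow, diagC_mul_diagC]

theorem αM_sq_mul_inv_diagC_comm (hP : ∀ k i, P k i ≠ 0) (k : Fin K) :
    (s.αM k) ^ 2 * (diagC (P k))⁻¹ = (diagC (P k))⁻¹ * (s.αM k) ^ 2 := by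
  rw [inv_diagC (hP k), αM, diagC_pow, diagC_mul_diagC, diagC_mul_diagC, mul_comm]

theorem inv_smul_αM_sq_mul_inv_diagC_mul_αM_sq (hP : ∀ k i, P k i ≠ 0) {c : ℝ} (hc : c ≠ 0)
    (k : Fin K) :
    ((c : ℂ) • ((s.αM k) ^ 2 * (diagC (P k))⁻¹))⁻¹ * (s.αM k) ^ 2
      = ((c⁻¹ : ℝ) : ℂ) • diagC (P k) := by
  have hne : ∀ i, (c • ((P k)⁻¹ * s.α k ^ 2)) i ≠ 0 := fun i => by
    simp [hc, hP k i, s.hα k i]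
  rw [s.αM_sq_mul_inv_diagC_comm hP, s.inv_diagC_mul_αM_sq hP, ofReal_smul_diagC, inv_diagC hne,
    αM, diagC_pow, diagC_mul_diagC, ofReal_smul_diagC]
  congr 1
  ext i
  simp only [Pi.mul_apply, Pi.inv_apply, Pi.smul_apply, Pi.pow_apply, smul_eq_mul]
  field_simp [hc, hP k i, s.hα k i]

theorem im_msCorrelation (hP : ∀ k i, P k i ≠ 0) (l : Fin K) : (s.msCorrelation P l).im = 0 := by
  rw [msCorrelation, Matrix.mul_assoc (s.U l), s.αM_sq_mul_inv_diagC_comm hP,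
    s.inv_diagC_mul_αM_sq hP]
  exact (s.hRm l).1.im_trace_mul_eq_zero
    (isHermitian_mul_mul_conjTranspose _ (isHermitian_diagC _))

theorem trace_mul_GammaDL (hP : ∀ k i, P k i ≠ 0) (k : Fin K) :
    ((diagC (P k))⁻¹ * (s.αM k) ^ 2 * (s.U k)ᴴ * s.GammaDL (fun l => diagC (P l)) k
        * s.U k).trace
      = ∑ i, s.dlInterference P k i
        + s.σe2 k * (∑ i, s.bsCorrelation P k i) * s.msCorrelation P k
        + s.σ2 * ((diagC (P k))⁻¹ * (s.αM k) ^ 2).trace := by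
  have hRm : ((diagC (P k))⁻¹ * (s.αM k) ^ 2 * (s.U k)ᴴ * s.Rm k * s.U k).trace
      = s.msCorrelation P k := by
    rw [msCorrelation, Matrix.mul_assoc (s.U k), s.αM_sq_mul_inv_diagC_comm hP, trace_mul_cycle,
      ← Matrix.mul_assoc, trace_mul_cycle]
    simp only [Matrix.mul_assoc]
  have hUU : ((diagC (P k))⁻¹ * (s.αM k) ^ 2 * (s.U k)ᴴ * s.U k).trace
      = ((diagC (P k))⁻¹ * (s.αM k) ^ 2).trace := by
    rw [Matrix.mul_assoc, s.inv_diagC_mul_αM_sq hP]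
    exact trace_diagonal_mul_of_diag_eq_one _ (s.hU k)
  simp only [GammaDL, Matrix.mul_add, Matrix.add_mul, trace_add, Matrix.mul_smul,
    Matrix.smul_mul, trace_smul, smul_eq_mul, Matrix.mul_sum, Matrix.sum_mul, trace_sum,
    Matrix.mul_one, dlInterference, bsCorrelation, Matrix.mul_assoc]
  simp only [Matrix.mul_assoc] at hRm hUU
  rw [hRm, hUU]

theorem re_trace_mul_GammaDL (hP : ∀ k i, P k i ≠ 0) (k : Fin K) :
    ((diagC (P k))⁻¹ * (s.αM k) ^ 2 * (s.U k)ᴴ * s.GammaDL (fun l => diagC (P l)) k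
        * s.U k).trace.re
      = ∑ i, s.coupling P k i + s.σ2 * ((diagC (P k))⁻¹ * (s.αM k) ^ 2).trace.re := by
  simp [s.trace_mul_GammaDL hP, coupling, Complex.mul_re, s.im_msCorrelation hP,
    s.im_bsCorrelation, Finset.sum_add_distrib, Finset.mul_sum, Finset.sum_mul, mul_assoc]

theorem trace_mul_GammaC (hP : ∀ k i, P k i ≠ 0) {β : Fin K → ℝ}
    {Q : ∀ k : Fin K, Matrix (Fin (s.S k)) (Fin (s.S k)) ℂ}
    (hQ : ∀ k, Q k = (β k : ℂ) • ((s.αM k) ^ 2 * (diagC (P k))⁻¹)) (k : Fin K) (hβ : β k ≠ 0) :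
    ((Q k)⁻¹ * (s.αM k) ^ 2 * (s.G k)ᴴ * s.GammaC Q * s.G k).trace
      = ((β k)⁻¹ : ℝ) * (∑ i, (β i * s.dlInterference P i k
          + s.σe2 i * (β i * s.msCorrelation P i) * s.bsCorrelation P i k)
        + s.σ2 * (diagC (P k)).trace) := by
  have hQ' : ∀ i, Q i = (β i : ℂ) • ((diagC (P i))⁻¹ * (s.αM i) ^ 2) := fun i => by
    rw [hQ, s.αM_sq_mul_inv_diagC_comm hP]
  have hInterf : ∀ i, (diagC (P k) * ((s.G k)ᴴ * (s.H i * (s.U i * ((diagC (P i))⁻¹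
      * ((s.αM i) ^ 2 * ((s.U i)ᴴ * ((s.H i)ᴴ * s.G k)))))))).trace
        = s.dlInterference P i k := fun i => by
    have := trace_mul_comm (diagC (P k) * (s.G k)ᴴ * s.H i * s.U i)
      ((diagC (P i))⁻¹ * (s.αM i) ^ 2 * (s.U i)ᴴ * (s.H i)ᴴ * s.G k)
    simp only [dlInterference, Matrix.mul_assoc] at this ⊢
    exact this
  have hBs : ∀ i, (diagC (P k) * ((s.G k)ᴴ * (s.Rb i * s.G k))).trace
      = s.bsCorrelation P i k := fun i => by
    have := trace_mul_comm (diagC (P k) * (s.G k)ᴴ) (s.Rb i * s.G k)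
    simp only [bsCorrelation, Matrix.mul_assoc] at this ⊢
    exact this
  have hMs : ∀ i, (s.Rm i * (s.U i * ((diagC (P i))⁻¹ * ((s.αM i) ^ 2 * (s.U i)ᴴ)))).trace
      = s.msCorrelation P i := fun i => by
    rw [msCorrelation, Matrix.mul_assoc (s.U i), s.αM_sq_mul_inv_diagC_comm hP]
    simp only [Matrix.mul_assoc]
  have hGG : (diagC (P k) * ((s.G k)ᴴ * s.G k)).trace = (diagC (P k)).trace :=
    trace_diagonal_mul_of_diag_eq_one _ (s.hG k)
  rw [hQ k, s.inv_smul_αM_sq_mul_inv_diagC_mul_αM_sq hP hβ, GammaC]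
  simp only [hQ', Matrix.mul_add, Matrix.add_mul, trace_add, Matrix.mul_smul, Matrix.smul_mul,
    trace_smul, smul_eq_mul, Matrix.mul_sum, Matrix.sum_mul, trace_sum, Matrix.mul_one,
    Matrix.mul_assoc, hInterf, hBs, hMs, hGG]
  rw [mul_add, Finset.mul_sum]
  congr 1
  · exact Finset.sum_congr rfl fun i _ => by ring
  · ring

theorem re_trace_mul_GammaC (hP : ∀ k i, P k i ≠ 0) {β : Fin K → ℝ}
    {Q : ∀ k : Fin K, Matrix (Fin (s.S k)) (Fin (s.S k)) ℂ}
    (hQ : ∀ k, Q k = (β k : ℂ) • ((s.αM k) ^ 2 * (diagC (P k))⁻¹)) (k : Fin K) (hβ : β k ≠ 0) :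
    ((Q k)⁻¹ * (s.αM k) ^ 2 * (s.G k)ᴴ * s.GammaC Q * s.G k).trace.re
      = (β k)⁻¹ * (∑ i, β i * s.coupling P i k + s.σ2 * (diagC (P k)).trace.re) := by
  rw [s.trace_mul_GammaC hP hQ k hβ, Complex.re_ofReal_mul]
  congr 1
  simp only [coupling, Complex.add_re, Complex.re_sum, Complex.mul_re, Complex.mul_im,
    Complex.ofReal_re, Complex.ofReal_im, s.im_msCorrelation hP, s.im_bsCorrelation, zero_mul,
    mul_zero, sub_zero, add_zero, add_left_inj]
  exact Finset.sum_congr rfl fun i _ => by ring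

end MIMOSetup

theorem userwise_AMSE_transfer_downlink_to_uplink_general {K N : ℕ}
    (s : MIMOSetup K N)
    (P : ∀ k : Fin K, Fin (s.S k) → ℝ) (hP : ∀ k i, 0 < P k i)
    (βt : Fin K → ℝ) (hβtpos : ∀ k, 0 < βt k)
    (hβt : s.Tmat P *ᵥ βt = fun k => s.σ2 * ((diagC (P k)).trace).re)
    (Q : ∀ k : Fin K, Matrix (Fin (s.S k)) (Fin (s.S k)) ℂ)
    (hQ : ∀ k, Q k = (βt k : ℂ) • ((s.αM k) ^ 2 * (diagC (P k))⁻¹)) :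
    ∀ k, s.xiULk Q k = s.xiDLk (fun k => diagC (P k)) k := by
  intro k
  have hP' : ∀ k i, P k i ≠ 0 := fun k i => (hP k i).ne'
  have hβ : βt k ≠ 0 := (hβtpos k).ne'
  have hrow := congrFun hβt k
  rw [s.Tmat_eq P, sub_mulVec, mulVec_transpose] at hrow
  simp only [Pi.sub_apply, mulVec_diagonal, vecMul, dotProduct, of_apply] at hrow
  have hsolve : (βt k)⁻¹ * (∑ i, βt i * s.coupling P i k + s.σ2 * (diagC (P k)).trace.re)
      = ∑ i, s.coupling P k i + s.σ2 * ((diagC (P k))⁻¹ * (s.αM k) ^ 2).trace.re := by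
    rw [inv_mul_eq_iff_eq_mul₀ hβ]
    linarith
  have hcross : (s.αM k * (s.G k)ᴴ * s.H k * s.U k).trace
      = ((s.G k)ᴴ * s.H k * s.U k * s.αM k).trace := by
    rw [Matrix.mul_assoc, Matrix.mul_assoc, trace_mul_comm]
    simp only [Matrix.mul_assoc]
  rw [MIMOSetup.xiULk, MIMOSetup.xiDLk, hcross, s.re_trace_mul_GammaC hP' hQ k hβ, hsolve,
    s.re_trace_mul_GammaDL hP' k]

/-- **User-wise AMSE transfer from downlink to uplink.** If `β̃ ∈ ℝ^K` solves
`T·β̃ = σ²·(tr P_1, …, tr P_K)ᵀ` with `β̃_k > 0` for every `k`, and the uplink power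
allocations are `Q_k = β̃_k • α_k² P_k⁻¹`, then every user achieves the same AMSE in both
channels. -/
theorem userwise_AMSE_transfer_downlink_to_uplink {K N : ℕ} (hK : 0 < K) (hN : 0 < N)
    (s : MIMOSetup K N)
    (P : ∀ k : Fin K, Fin (s.S k) → ℝ) (hP : ∀ k i, 0 < P k i)
    (βt : Fin K → ℝ) (hβtpos : ∀ k, 0 < βt k)
    (hβt : s.Tmat P *ᵥ βt = fun k => s.σ2 * ((diagC (P k)).trace).re)
    (Q : ∀ k : Fin K, Matrix (Fin (s.S k)) (Fin (s.S k)) ℂ)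
    (hQ : ∀ k, Q k = (βt k : ℂ) • ((s.αM k) ^ 2 * (diagC (P k))⁻¹)) :
    ∀ k, s.xiULk Q k = s.xiDLk (fun k => diagC (P k)) k :=
  userwise_AMSE_transfer_downlink_to_uplink_general s P hP βt hβtpos hβt Q hQ
end
end
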